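/- If α < β < ε_{Ω+1}, then Θ_X(α) < Θ_X(β) if and only if α* < Θ_X(β). -/

import Mathlib

open Ordinal Set

noncomputable section
open scoped Classical

/-- `Ω`, the first uncountable ordinal. -/
def OmegaO : Ordinal := (Cardinal.aleph 1).ord

/-- `ε_{Ω+1}`, the least `ε > Ω` with `ω ^ ε = ε`. -/
def epsOmega : Ordinal := nfp (fun a => Ordinal.omega0 ^ a) (OmegaO + 1)

lemma omega0_le_OmegaO : Ordinal.omega0 ≤ OmegaO := by
  rw [OmegaO, ← Cardinal.ord_aleph0]
  exact Cardinal.ord_le_ord.2 (Cardinal.aleph0_le_aleph 1)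

lemma one_lt_OmegaO : 1 < OmegaO :=
  lt_of_lt_of_le Ordinal.one_lt_omega0 omega0_le_OmegaO

lemma OmegaO_pos : 0 < OmegaO := lt_trans zero_lt_one one_lt_OmegaO

/-- `ξ*`, the maximal coefficient in the `Ω`-normal form of `ξ`. -/
def star (ξ : Ordinal) : Ordinal :=
  if h0 : ξ = 0 then 0
  else if hl : log OmegaO ξ < ξ then
    max (max (star (log OmegaO ξ)) (star (ξ % OmegaO ^ log OmegaO ξ)))
      (ξ / OmegaO ^ log OmegaO ξ)
  else 0
termination_by ξ
decreasing_by
  · exact hl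
  · exact mod_opow_log_lt_self _ h0

/-- The generalized fundamental sequence `ξ[θ]`. -/
def fs (ξ θ : Ordinal) : Ordinal :=
  if h0 : ξ ≤ 1 then 0
  else if hmod : ξ % OmegaO ^ log OmegaO ξ ≠ 0 then
    OmegaO ^ log OmegaO ξ * (ξ / OmegaO ^ log OmegaO ξ) + fs (ξ % OmegaO ^ log OmegaO ξ) θ
  else if Order.IsSuccLimit (ξ / OmegaO ^ log OmegaO ξ) then OmegaO ^ log OmegaO ξ * θ
  else if hβ : ξ / OmegaO ^ log OmegaO ξ = 1 then
    (if hlog : Order.IsSuccLimit (log OmegaO ξ) then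
       (if hll : log OmegaO ξ < ξ then OmegaO ^ fs (log OmegaO ξ) θ else 0)
     else OmegaO ^ Ordinal.pred (log OmegaO ξ) * θ)
  else
    OmegaO ^ log OmegaO ξ * Ordinal.pred (ξ / OmegaO ^ log OmegaO ξ) + fs (OmegaO ^ log OmegaO ξ) θ
termination_by ξ
decreasing_by
  · exact mod_opow_log_lt_self _ (by intro h; exact h0 (by simp [h]))
  · exact hll
  · -- `Ω ^ log Ω ξ < ξ`
    have hξ0 : ξ ≠ 0 := by intro h; exact h0 (by simp [h])
    have hle : OmegaO ^ log OmegaO ξ ≤ ξ := opow_log_le_self _ hξ0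
    have hpos : 0 < OmegaO ^ log OmegaO ξ :=
      opow_pos _ OmegaO_pos
    have hβ0 : 0 < ξ / OmegaO ^ log OmegaO ξ :=
      Ordinal.div_pos (by positivity) |>.2 hle
    have hβ1 : 1 < ξ / OmegaO ^ log OmegaO ξ :=
      lt_of_le_of_ne (by rw [← Ordinal.succ_zero]; exact Order.succ_le_of_lt hβ0) (Ne.symm hβ)
    calc OmegaO ^ log OmegaO ξ = OmegaO ^ log OmegaO ξ * 1 := (mul_one _).symm
      _ < OmegaO ^ log OmegaO ξ * (ξ / OmegaO ^ log OmegaO ξ) := by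
          first | exact mul_lt_mul_of_pos_left hβ1 hpos | exact (mul_lt_mul_iff_right₀ hpos).2 hβ1
      _ ≤ ξ := Ordinal.mul_div_le _ _

/-- The terminal part `τ(ξ)`. -/
def tau (ξ : Ordinal) : Ordinal :=
  if h0 : ξ = 0 then 0
  else if hmod : ξ % OmegaO ^ log OmegaO ξ ≠ 0 then tau (ξ % OmegaO ^ log OmegaO ξ)
  else if Order.IsSuccLimit (ξ / OmegaO ^ log OmegaO ξ) then ξ / OmegaO ^ log OmegaO ξ
  else if log OmegaO ξ = 0 then 1
  else if hlog : Order.IsSuccLimit (log OmegaO ξ) then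
    (if hll : log OmegaO ξ < ξ then tau (log OmegaO ξ) else 0)
  else OmegaO
termination_by ξ
decreasing_by
  · exact mod_opow_log_lt_self _ h0
  · exact hll

/-- The collapsing function `Θ_X`. -/
def ThetaF (X : Set Ordinal) (ξ : Ordinal) : Ordinal :=
  sInf {θ | θ ∈ X ∧ star ξ < θ ∧ ∀ ζ, ζ < ξ → star ζ < θ → ThetaF X ζ < θ}
termination_by ξ
decreasing_by exact by assumption

/-- `Ω_n`: the tower `Ω_0 = 1`, `Ω_{n+1} = Ω ^ Ω_n`. -/
def OmegaTow : ℕ → Ordinal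
  | 0 => 1
  | n + 1 => OmegaO ^ OmegaTow n

/-- `Θ_X(ε_{Ω+1}) = sup_n Θ_X(Ω_n)`. -/
def ThetaEps (X : Set Ordinal) : Ordinal := ⨆ n : ℕ, ThetaF X (OmegaTow n)

/-- `ε̂_{Ω+1}`. -/
def hatEps (X : Set Ordinal) : Set Ordinal :=
  {ξ | ξ < epsOmega ∧ star ξ < ThetaEps X}

/-- `X` is a club in `Ω`. -/
def IsClubBelowOmega (X : Set Ordinal) : Prop :=
  (∀ x ∈ X, x < OmegaO) ∧
  (∀ a, a < OmegaO → ∃ x ∈ X, a < x) ∧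
  (∀ S : Set Ordinal, S ⊆ X → S.Nonempty → sSup S < OmegaO → sSup S ∈ X)

/-- The set of limit points of `X` (below `Ω`). -/
def limitPtsOf (X : Set Ordinal) : Set Ordinal :=
  {x | 0 < x ∧ ∀ y, y < x → ∃ z ∈ X, y < z ∧ z < x}

/-- `FIX(X)`. -/
def FIXs (X : Set Ordinal) : Set Ordinal :=
  {ξ | ξ < epsOmega ∧ star (fs ξ 1) < star ξ ∧ star ξ = tau ξ ∧
    ∃ γ, ξ < γ ∧ γ < epsOmega ∧ star ξ = ThetaF X γ}

/-- `JUMP(X)`. -/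
def JUMPs (X : Set Ordinal) : Set Ordinal :=
  {0} ∪ {ξ | ∃ ζ, ξ = ζ + 1} ∪ FIXs X

/-- `Θ*`. -/
def ThetaStarF (X : Set Ordinal) (ξ : Ordinal) : Ordinal :=
  if ∃ ζ, ξ = ζ + 1 then ThetaF X (Ordinal.pred ξ)
  else if ξ ∈ FIXs X then tau ξ
  else 0

/-- `ξ̌`. -/
def checkF (X : Set Ordinal) (ξ : Ordinal) : Ordinal :=
  if 0 < ThetaStarF X ξ then OmegaO * (ξ / OmegaO) else ξ

/-- `ℙ`, the club of countable additively indecomposable ordinals. -/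
def PP : Set Ordinal := {x | x < OmegaO ∧ ∃ a, x = Ordinal.omega0 ^ a}

/-- `1 + Ord`, the club of nonzero countable ordinals. -/
def oneOrdS : Set Ordinal := {x | 0 < x ∧ x < OmegaO}

/-- `Θ^{(i)}(ξ)`. -/
def ThetaIter (X : Set Ordinal) (ξ : Ordinal) : ℕ → Ordinal
  | 0 => ThetaStarF X ξ
  | n + 1 => ThetaF X (fs (checkF X ξ) (ThetaIter X ξ n))

/-- A Buchholz system of fundamental sequences for `Θ_X`. -/
def IsBuchholz (X : Set Ordinal) (B : Ordinal → ℕ → Ordinal) : Prop :=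
  (∀ n, B 0 n = 0) ∧
  (∀ α ξ n, ξ ∈ hatEps X → OmegaO ≤ ξ → tau ξ < OmegaO → ξ = fs α (tau ξ) →
    B ξ n = fs α (B (tau ξ) n)) ∧
  (∀ ξ n, ξ ∈ hatEps X → 0 < tau (checkF X ξ) → tau (checkF X ξ) < OmegaO →
    B (ThetaF X ξ) n = ThetaF X (B (checkF X ξ) n + ThetaStarF X ξ)) ∧
  (∀ ξ n, ξ ∈ hatEps X → tau (checkF X ξ) = OmegaO →
    B (ThetaF X ξ) n = ThetaIter X ξ n)

/-- The additional clause for the `σ = Θ_{1+Ord}` Buchholz system. -/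
def SigmaExtra (B : Ordinal → ℕ → Ordinal) : Prop :=
  ∀ β n, β < OmegaO → B (ThetaF oneOrdS β) n = β

/-- The additional clauses for the `ϑ = Θ_ℙ` Buchholz system. -/
def VarthetaExtra (B : Ordinal → ℕ → Ordinal) : Prop :=
  (∀ α β n, 0 < β → (∀ α' < α, α' + β < α + β) → B (α + β) n = α + B β n) ∧
  (∀ β n, β < OmegaO → β ∈ JUMPs PP → B (ThetaF PP β) n = ThetaStarF PP β * n)

/-!
`Θ_X(ξ)` is the least element of the set of candidates `θ ∈ X` with `ξ* < θ` that bound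
`Θ_X(ζ)` for every `ζ < ξ` with `ζ* < θ`; once that set is nonempty, both directions follow
from `Θ_X(α)` being a candidate for `α` and `Θ_X(β)` being one for `β`.

Nonemptiness is a countability argument. For `c < Ω` only countably many `ζ < ε_{Ω+1}` have
`ζ* ≤ c`, since each is built from `0` by finitely many steps `Ω ^ a * b + d` with `b ≤ c`;
so `B(c) = sup {Θ_X(ζ) | ζ < ξ, ζ* ≤ c}` is a countable ordinal. Iterating
`θ ↦ (next element of X above θ and B(θ))` `ω` times from above `ξ*` and taking the supremum
gives a point of the club `X` closed under `B`, which is a candidate.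
-/

lemma OmegaO_eq_omega_one : OmegaO = ω₁ :=
  Cardinal.ord_aleph 1

lemma countable_Iic_of_lt_OmegaO {δ : Ordinal} (hδ : δ < OmegaO) : (Iic δ).Countable := by
  rw [OmegaO_eq_omega_one, Cardinal.lt_omega_iff_card_lt, Cardinal.lt_aleph_one_iff] at hδ
  rw [← Iio_insert, countable_insert, ← Cardinal.le_aleph0_iff_set_countable,
    Cardinal.mk_Iio_ordinal, Cardinal.lift_le_aleph0]
  exact hδ

lemma sSup_lt_OmegaO {S : Set Ordinal} (hS : S.Countable) (hlt : ∀ x ∈ S, x < OmegaO) :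
    sSup S < OmegaO := by
  have := hS.to_subtype
  rw [sSup_eq_iSup', OmegaO_eq_omega_one]
  exact Ordinal.iSup_lt_omega_one fun x => OmegaO_eq_omega_one ▸ hlt x x.2

lemma log_OmegaO_lt_self {ξ : Ordinal} (h0 : ξ ≠ 0) (hξ : ξ < epsOmega) :
    log OmegaO ξ < ξ := by
  rw [← lt_opow_iff_log_lt one_lt_OmegaO h0]
  rcases lt_trichotomy ξ OmegaO with hlt | rfl | hgt
  · calc ξ < OmegaO := hlt
      _ = OmegaO ^ (1 : Ordinal) := (opow_one _).symm
      _ ≤ OmegaO ^ ξ := opow_le_opow_right OmegaO_pos (Order.one_le_iff_ne_zero.2 h0)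
  · calc OmegaO = OmegaO ^ (1 : Ordinal) := (opow_one _).symm
      _ < OmegaO ^ OmegaO := (opow_lt_opow_iff_right one_lt_OmegaO).2 one_lt_OmegaO
  · -- otherwise `ξ` would be a fixed point of `ω ^ ·` above `Ω`, hence `ε_{Ω+1} ≤ ξ`
    have hfix : ω ^ ξ ≠ ξ := fun he =>
      (nfp_le_fp (isNormal_opow one_lt_omega0).monotone (Order.add_one_le_iff.2 hgt)
        he.le).not_gt hξ
    calc ξ < ω ^ ξ := (right_le_opow ξ one_lt_omega0).lt_of_ne' hfix
      _ ≤ OmegaO ^ ξ := opow_le_opow_left ξ omega0_le_OmegaO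

lemma star_of_ne_zero {ξ : Ordinal} (h0 : ξ ≠ 0) (hξ : ξ < epsOmega) :
    star ξ = max (max (star (log OmegaO ξ)) (star (ξ % OmegaO ^ log OmegaO ξ)))
      (ξ / OmegaO ^ log OmegaO ξ) := by
  rw [_root_.star, dif_neg h0, dif_pos (log_OmegaO_lt_self h0 hξ)]

lemma star_lt_OmegaO (ξ : Ordinal) (hξ : ξ < epsOmega) : star ξ < OmegaO := by
  induction ξ using WellFoundedLT.induction with
  | ind ξ IH =>
    rcases eq_or_ne ξ 0 with rfl | h0
    · rw [_root_.star, dif_pos rfl]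
      exact OmegaO_pos
    have hlog := log_OmegaO_lt_self h0 hξ
    have hmod := mod_opow_log_lt_self OmegaO h0
    rw [star_of_ne_zero h0 hξ]
    exact max_lt (max_lt (IH _ hlog (hlog.trans hξ)) (IH _ hmod (hmod.trans hξ)))
      (div_opow_log_lt ξ one_lt_OmegaO)

section Countability

def normalFormClosure (δ : Ordinal) : ℕ → Set Ordinal
  | 0 => {0}
  | n + 1 => normalFormClosure δ n ∪
      (fun p : Ordinal × Ordinal × Ordinal => OmegaO ^ p.1 * p.2.1 + p.2.2) ''
        (normalFormClosure δ n ×ˢ (Iic δ ×ˢ normalFormClosure δ n))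

variable {δ : Ordinal}

lemma normalFormClosure_countable (hδ : δ < OmegaO) (n : ℕ) :
    (normalFormClosure δ n).Countable := by
  induction n with
  | zero => exact countable_singleton 0
  | succ n ih => exact ih.union ((ih.prod ((countable_Iic_of_lt_OmegaO hδ).prod ih)).image _)

lemma normalFormClosure_mono : Monotone (normalFormClosure δ) :=
  monotone_nat_of_le_succ fun _ => subset_union_left

lemma exists_mem_normalFormClosure (ζ : Ordinal) (hζ : ζ < epsOmega) (hs : star ζ ≤ δ) :
    ∃ n, ζ ∈ normalFormClosure δ n := by
  induction ζ using WellFoundedLT.induction with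
  | ind ζ IH =>
    rcases eq_or_ne ζ 0 with rfl | h0
    · exact ⟨0, rfl⟩
    have hlog := log_OmegaO_lt_self h0 hζ
    have hmod := mod_opow_log_lt_self OmegaO h0
    rw [star_of_ne_zero h0 hζ, max_le_iff, max_le_iff] at hs
    obtain ⟨⟨hs_log, hs_mod⟩, hs_div⟩ := hs
    obtain ⟨m, hm⟩ := IH _ hlog (hlog.trans hζ) hs_log
    obtain ⟨k, hk⟩ := IH _ hmod (hmod.trans hζ) hs_mod
    refine ⟨max m k + 1, Or.inr ⟨⟨_, _, _⟩, ⟨?_, hs_div, ?_⟩, div_add_mod ζ _⟩⟩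
    · exact normalFormClosure_mono (le_max_left m k) hm
    · exact normalFormClosure_mono (le_max_right m k) hk

lemma countable_setOf_star_le (hδ : δ < OmegaO) :
    {ζ | ζ < epsOmega ∧ star ζ ≤ δ}.Countable := by
  refine (countable_iUnion (normalFormClosure_countable hδ)).mono fun ζ ⟨hζ, hs⟩ => ?_
  exact mem_iUnion.2 (exists_mem_normalFormClosure ζ hζ hs)

end Countability

lemma IsClubBelowOmega.exists_mem_forall_lt {X : Set Ordinal} (hX : IsClubBelowOmega X)
    {f : Ordinal → Ordinal} (hf : Monotone f) (hfΩ : ∀ c < OmegaO, f c < OmegaO)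
    {a : Ordinal} (ha : a < OmegaO) : ∃ w ∈ X, a < w ∧ ∀ c < w, f c < w := by
  have hstep : ∀ t, ∃ s, t < OmegaO → s ∈ X ∧ max t (f t) < s := fun t => by
    by_cases ht : t < OmegaO
    · obtain ⟨s, hsX, hs⟩ := hX.2.1 _ (max_lt ht (hfΩ t ht))
      exact ⟨s, fun _ => ⟨hsX, hs⟩⟩
    · exact ⟨0, fun h => absurd h ht⟩
  choose next hnext using hstep
  obtain ⟨x₀, hx₀X, hax₀⟩ := hX.2.1 a ha
  set θ : ℕ → Ordinal := fun n => next^[n] x₀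
  have hθ_succ : ∀ n, θ (n + 1) = next (θ n) := fun n =>
    Function.iterate_succ_apply' next n x₀
  have hθX : ∀ n, θ n ∈ X := fun n => by
    induction n with
    | zero => exact hx₀X
    | succ n ih => exact hθ_succ n ▸ (hnext _ (hX.1 _ ih)).1
  have hθ_lt : ∀ n, max (θ n) (f (θ n)) < θ (n + 1) := fun n =>
    hθ_succ n ▸ (hnext _ (hX.1 _ (hθX n))).2
  have hw : ⨆ n, θ n < OmegaO :=
    sSup_lt_OmegaO (countable_range θ) (forall_mem_range.2 fun n => hX.1 _ (hθX n))
  refine ⟨⨆ n, θ n, hX.2.2 _ (range_subset_iff.2 hθX) (range_nonempty θ) hw,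
    hax₀.trans_le (Ordinal.le_iSup θ 0), fun c hc => ?_⟩
  obtain ⟨n, hn⟩ := Ordinal.lt_iSup_iff.1 hc
  calc f c ≤ f (θ n) := hf hn.le
    _ < θ (n + 1) := (le_max_right _ _).trans_lt (hθ_lt n)
    _ ≤ ⨆ n, θ n := Ordinal.le_iSup θ _

section Collapse

variable {X : Set Ordinal}

def thetaCandidates (X : Set Ordinal) (ξ : Ordinal) : Set Ordinal :=
  {θ | θ ∈ X ∧ star ξ < θ ∧ ∀ ζ, ζ < ξ → star ζ < θ → ThetaF X ζ < θ}

lemma ThetaF_eq_sInf (X : Set Ordinal) (ξ : Ordinal) :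
    ThetaF X ξ = sInf (thetaCandidates X ξ) := by
  rw [ThetaF, thetaCandidates]

lemma ThetaF_lt_OmegaO (hX : ∀ x ∈ X, x < OmegaO) (ξ : Ordinal) : ThetaF X ξ < OmegaO := by
  rw [ThetaF_eq_sInf]
  rcases (thetaCandidates X ξ).eq_empty_or_nonempty with h | h
  · rw [h, sInf_empty]
    exact OmegaO_pos
  · exact hX _ (csInf_mem h).1

def thetaBound (X : Set Ordinal) (ξ c : Ordinal) : Ordinal :=
  sSup (ThetaF X '' {ζ | ζ < ξ ∧ star ζ ≤ c})

lemma bddAbove_image_ThetaF (hX : ∀ x ∈ X, x < OmegaO) (S : Set Ordinal) :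
    BddAbove (ThetaF X '' S) :=
  ⟨OmegaO, forall_mem_image.2 fun ζ _ => (ThetaF_lt_OmegaO hX ζ).le⟩

lemma ThetaF_le_thetaBound (hX : ∀ x ∈ X, x < OmegaO) {ξ ζ c : Ordinal} (hζ : ζ < ξ)
    (hc : star ζ ≤ c) : ThetaF X ζ ≤ thetaBound X ξ c :=
  le_csSup (bddAbove_image_ThetaF hX _) ⟨ζ, ⟨hζ, hc⟩, rfl⟩

lemma thetaBound_mono (hX : ∀ x ∈ X, x < OmegaO) (ξ : Ordinal) : Monotone (thetaBound X ξ) :=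
  fun _ _ hcc' => csSup_le_csSup' (bddAbove_image_ThetaF hX _)
    (image_mono fun _ ⟨hζ, hc⟩ => ⟨hζ, hc.trans hcc'⟩)

lemma thetaBound_lt_OmegaO (hX : ∀ x ∈ X, x < OmegaO) {ξ c : Ordinal} (hξ : ξ < epsOmega)
    (hc : c < OmegaO) : thetaBound X ξ c < OmegaO := by
  refine sSup_lt_OmegaO (((countable_setOf_star_le hc).mono ?_).image _)
    (forall_mem_image.2 fun ζ _ => ThetaF_lt_OmegaO hX ζ)
  exact fun ζ ⟨hζ, hs⟩ => ⟨hζ.trans hξ, hs⟩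

lemma thetaCandidates_nonempty (hX : IsClubBelowOmega X) {ξ : Ordinal} (hξ : ξ < epsOmega) :
    (thetaCandidates X ξ).Nonempty := by
  obtain ⟨w, hwX, hξw, hw⟩ := hX.exists_mem_forall_lt (thetaBound_mono hX.1 ξ)
    (fun _ hc => thetaBound_lt_OmegaO hX.1 hξ hc) (star_lt_OmegaO ξ hξ)
  exact ⟨w, hwX, hξw, fun ζ hζ hζw =>
    (ThetaF_le_thetaBound hX.1 hζ le_rfl).trans_lt (hw _ hζw)⟩

lemma ThetaF_mem_thetaCandidates (hX : IsClubBelowOmega X) {ξ : Ordinal}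
    (hξ : ξ < epsOmega) : ThetaF X ξ ∈ thetaCandidates X ξ :=
  ThetaF_eq_sInf X ξ ▸ csInf_mem (thetaCandidates_nonempty hX hξ)

end Collapse

theorem stmt4_general (X : Set Ordinal) (hX : IsClubBelowOmega X)
    (α β : Ordinal) (h1 : α < β) (h2 : β < epsOmega) :
    ThetaF X α < ThetaF X β ↔ star α < ThetaF X β :=
  ⟨fun h => (ThetaF_mem_thetaCandidates hX (h1.trans h2)).2.1.trans h,
    (ThetaF_mem_thetaCandidates hX h2).2.2 α h1⟩

/-- `Θ_X(α) < Θ_X(β)` iff `α* < Θ_X(β)`, for `α < β < ε_{Ω+1}`. -/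
theorem stmt4 (X : Set Ordinal) (hX : IsClubBelowOmega X) (h0X : 0 ∉ X)
    (α β : Ordinal) (h1 : α < β) (h2 : β < epsOmega) :
    ThetaF X α < ThetaF X β ↔ star α < ThetaF X β :=
  stmt4_general X hX α β h1 h2

end
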